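/- Let A ∈ ℝ^{N×T} have singular value decomposition A = S Σ Rᵀ and for λ ≥ 0 define shrink_λ(A) = S Σ̃ Rᵀ where Σ̃ replaces each singular value σᵢ by max(σᵢ − λ, 0). Then shrink_λ(A) is the unique minimizer over L ∈ ℝ^{N×T} of (1/2)‖A − L‖_F² + λ‖L‖_*. -/

import Mathlib

open Matrix BigOperators

noncomputable def singVals {N T : ℕ} (A : Matrix (Fin N) (Fin T) ℝ) : Fin T → ℝ :=
  fun i => Real.sqrt ((show (Aᵀ * A).IsHermitian from Matrix.isHermitian_conjTranspose_mul_self A).eigenvalues i)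

noncomputable def nuclearNorm {N T : ℕ} (A : Matrix (Fin N) (Fin T) ℝ) : ℝ :=
  ∑ i, singVals A i

noncomputable def opNorm {N T : ℕ} (A : Matrix (Fin N) (Fin T) ℝ) : ℝ :=
  ⨆ i, singVals A i

noncomputable def frobNorm {N T : ℕ} (A : Matrix (Fin N) (Fin T) ℝ) : ℝ :=
  Real.sqrt (∑ i, ∑ t, (A i t)^2)

noncomputable def maxNorm {N T : ℕ} (A : Matrix (Fin N) (Fin T) ℝ) : ℝ :=
  ⨆ i, ⨆ t, |A i t|

def mip {N T : ℕ} (A B : Matrix (Fin N) (Fin T) ℝ) : ℝ := (Aᵀ * B).trace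

open Matrix BigOperators

/-!
Orthogonal factors `S` and `R` change neither the Frobenius norm nor the spectrum of the Gram
matrix, so replacing `L` by `Sᵀ L R` reduces the problem to the rectangular diagonal matrix
`D = diag σ`. For every `X`, the sum `∑ |X i i|` of the diagonal entries is at most `‖X‖_*`: write
`X = C Uᵀ` with `U` an orthonormal eigenbasis of `Xᵀ X`, so that the columns of `C` have norms the
singular values, and apply Cauchy–Schwarz column by column. Equality holds for diagonal `X`.
The objective therefore dominates `½‖D - X‖_F² + λ ∑ |X i i|`, which splits into scalar problems
`½ (s - x)² + λ |x|` with `s ≥ 0`; each is minimised by `max (s - λ) 0` with quadratic growth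
`½ (x - max (s - λ) 0)²`, and this growth makes the minimiser unique.
-/

theorem charpoly_mul_mul_transpose {n R : Type*} [Fintype n] [DecidableEq n] [CommRing R]
    {P : Matrix n n R} (hP : Pᵀ * P = 1) (B : Matrix n n R) :
    (P * B * Pᵀ).charpoly = B.charpoly := by
  rw [charpoly_mul_comm, ← Matrix.mul_assoc, hP, Matrix.one_mul]

theorem transpose_mul_self_mul_mul_transpose {m n R : Type*} [Fintype m] [Fintype n]
    [DecidableEq m] [CommRing R] {S : Matrix m m R} (hS : Sᵀ * S = 1) (X : Matrix m n R)
    (Q : Matrix n n R) : (S * X * Qᵀ)ᵀ * (S * X * Qᵀ) = Q * (Xᵀ * X) * Qᵀ := by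
  simp only [transpose_mul, transpose_transpose, Matrix.mul_assoc]
  rw [← Matrix.mul_assoc Sᵀ, hS, Matrix.one_mul]

theorem singVals_mul_mul_transpose {N T : ℕ} {S : Matrix (Fin N) (Fin N) ℝ}
    {R : Matrix (Fin T) (Fin T) ℝ} (hS : Sᵀ * S = 1) (hR : Rᵀ * R = 1)
    (X : Matrix (Fin N) (Fin T) ℝ) : singVals (S * X * Rᵀ) = singVals X := by
  have hcharpoly : ((S * X * Rᵀ)ᵀ * (S * X * Rᵀ)).charpoly = (Xᵀ * X).charpoly := by
    rw [transpose_mul_self_mul_mul_transpose hS, charpoly_mul_mul_transpose hR]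
  ext i
  unfold singVals
  rw [(IsHermitian.eigenvalues_eq_eigenvalues_iff _ _).mpr hcharpoly]

theorem nuclearNorm_mul_mul_transpose {N T : ℕ} {S : Matrix (Fin N) (Fin N) ℝ}
    {R : Matrix (Fin T) (Fin T) ℝ} (hS : Sᵀ * S = 1) (hR : Rᵀ * R = 1)
    (X : Matrix (Fin N) (Fin T) ℝ) : nuclearNorm (S * X * Rᵀ) = nuclearNorm X := by
  simp only [nuclearNorm, singVals_mul_mul_transpose hS hR]

theorem frobNorm_sq {N T : ℕ} (X : Matrix (Fin N) (Fin T) ℝ) :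
    frobNorm X ^ 2 = ∑ i, ∑ t, X i t ^ 2 :=
  Real.sq_sqrt (by positivity)

theorem frobNorm_eq_sqrt_trace {N T : ℕ} (X : Matrix (Fin N) (Fin T) ℝ) :
    frobNorm X = √(Xᵀ * X).trace := by
  simp only [frobNorm, trace, diag, mul_apply, transpose_apply, sq]
  rw [Finset.sum_comm]

theorem frobNorm_mul_mul_transpose {N T : ℕ} {S : Matrix (Fin N) (Fin N) ℝ}
    {R : Matrix (Fin T) (Fin T) ℝ} (hS : Sᵀ * S = 1) (hR : Rᵀ * R = 1)
    (X : Matrix (Fin N) (Fin T) ℝ) : frobNorm (S * X * Rᵀ) = frobNorm X := by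
  rw [frobNorm_eq_sqrt_trace, frobNorm_eq_sqrt_trace, transpose_mul_self_mul_mul_transpose hS,
    trace_mul_cycle, hR, Matrix.one_mul]

theorem frobNorm_pos {N T : ℕ} {X : Matrix (Fin N) (Fin T) ℝ} (hX : X ≠ 0) : 0 < frobNorm X := by
  obtain ⟨i, t, hit⟩ : ∃ i t, X i t ≠ 0 := by
    by_contra! h
    exact hX (Matrix.ext h)
  refine Real.sqrt_pos.mpr (Finset.sum_pos' (fun i _ => by positivity) ⟨i, Finset.mem_univ _, ?_⟩)
  exact Finset.sum_pos' (fun t _ => by positivity) ⟨t, Finset.mem_univ _, by positivity⟩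

theorem Matrix.IsHermitian.sum_comp_eigenvalues_of_eq_diagonal {n : Type*} [Fintype n] [DecidableEq n]
    {B : Matrix n n ℝ} (hB : B.IsHermitian) {e : n → ℝ} (he : B = diagonal e) (f : ℝ → ℝ) :
    ∑ i, f (hB.eigenvalues i) = ∑ i, f (e i) := by
  subst he
  have hroots := hB.roots_charpoly_eq_eigenvalues
  rw [charpoly_diagonal, Polynomial.roots_prod _ _
    (by simp [Finset.prod_ne_zero_iff, Polynomial.X_sub_C_ne_zero])] at hroots
  simp only [Polynomial.roots_X_sub_C, Multiset.bind_singleton] at hroots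
  have hsum := congrArg (fun s => (s.map f).sum) hroots.symm
  simp only [Multiset.map_map] at hsum
  exact hsum

theorem Fin.sum_ite_val_eq {M : Type*} [AddCommMonoid M] {n : ℕ} (c : ℕ) (g : Fin n → M) :
    ∑ i : Fin n, (if (i : ℕ) = c then g i else 0) = if h : c < n then g ⟨c, h⟩ else 0 := by
  split_ifs with h
  · have hiff : ∀ i : Fin n, (i : ℕ) = c ↔ i = ⟨c, h⟩ := fun i => by simp [Fin.ext_iff]
    simp only [hiff, Finset.sum_ite_eq', Finset.mem_univ, if_true]
  · exact Finset.sum_eq_zero fun i _ => if_neg (by omega)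

theorem sum_sum_ite_val_eq_le {N T : ℕ} {b : Fin T → ℝ} (hb : ∀ t, 0 ≤ b t) :
    ∑ i : Fin N, ∑ t : Fin T, (if (i : ℕ) = t then b t else 0) ≤ ∑ t, b t := by
  rw [Finset.sum_comm]
  refine Finset.sum_le_sum fun t _ => ?_
  rw [Fin.sum_ite_val_eq]
  split_ifs
  · exact le_rfl
  · exact hb t

theorem sum_sum_ite_val_eq_abs_mul_le {N T : ℕ} (a : Fin N → ℝ) (b : Fin T → ℝ) :
    ∑ i : Fin N, ∑ t : Fin T, (if (i : ℕ) = t then |a i| * |b t| else 0)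
      ≤ √(∑ i, a i ^ 2) * √(∑ t, b t ^ 2) := by
  set b' : Fin N → ℝ := fun i => ∑ t : Fin T, if (i : ℕ) = t then |b t| else 0
  have hb' : ∀ i, b' i ^ 2 = ∑ t : Fin T, if (i : ℕ) = t then b t ^ 2 else 0 := by
    intro i
    simp only [b', eq_comm (a := (i : ℕ)), Fin.sum_ite_val_eq]
    split_ifs <;> simp
  calc ∑ i : Fin N, ∑ t : Fin T, (if (i : ℕ) = t then |a i| * |b t| else 0)
      = ∑ i, |a i| * b' i := by
        simp only [b', Finset.mul_sum, mul_ite, mul_zero]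
    _ ≤ √(∑ i, |a i| ^ 2) * √(∑ i, b' i ^ 2) := Real.sum_mul_le_sqrt_mul_sqrt _ _ _
    _ ≤ √(∑ i, a i ^ 2) * √(∑ t, b t ^ 2) := by
        simp only [sq_abs, hb']
        gcongr
        exact sum_sum_ite_val_eq_le fun t => sq_nonneg _

def diagAbsSum {N T : ℕ} (X : Matrix (Fin N) (Fin T) ℝ) : ℝ :=
  ∑ i : Fin N, ∑ t : Fin T, if (i : ℕ) = (t : ℕ) then |X i t| else 0

theorem sum_col_sq_eq_one_of_transpose_mul_self {n : Type*} [Fintype n] [DecidableEq n] {U : Matrix n n ℝ}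
    (hU : Uᵀ * U = 1) (k : n) : ∑ t, U t k ^ 2 = 1 := by
  simpa [mul_apply, sq] using congrFun (congrFun hU k) k

theorem diagAbsSum_mul_transpose_le {N T : ℕ} (C : Matrix (Fin N) (Fin T) ℝ)
    {U : Matrix (Fin T) (Fin T) ℝ} (hU : Uᵀ * U = 1) :
    diagAbsSum (C * Uᵀ) ≤ ∑ k, √(∑ i, C i k ^ 2) := by
  calc diagAbsSum (C * Uᵀ)
      ≤ ∑ i : Fin N, ∑ t : Fin T, ∑ k, if (i : ℕ) = t then |C i k| * |U t k| else 0 := by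
        refine Finset.sum_le_sum fun i _ => Finset.sum_le_sum fun t _ => ?_
        split_ifs
        · simp only [mul_apply, transpose_apply, ← abs_mul]
          exact Finset.abs_sum_le_sum_abs _ _
        · simp
    _ = ∑ k, ∑ i : Fin N, ∑ t : Fin T, if (i : ℕ) = t then |C i k| * |U t k| else 0 :=
        (Finset.sum_congr rfl fun _ _ => Finset.sum_comm).trans Finset.sum_comm
    _ ≤ ∑ k : Fin T, √(∑ i, C i k ^ 2) * √(∑ t, U t k ^ 2) :=
        Finset.sum_le_sum fun k _ => sum_sum_ite_val_eq_abs_mul_le _ _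
    _ = ∑ k, √(∑ i, C i k ^ 2) := by simp only [sum_col_sq_eq_one_of_transpose_mul_self hU, Real.sqrt_one, mul_one]

theorem diagAbsSum_le_nuclearNorm {N T : ℕ} (X : Matrix (Fin N) (Fin T) ℝ) :
    diagAbsSum X ≤ nuclearNorm X := by
  have hB : (Xᵀ * X).IsHermitian := isHermitian_conjTranspose_mul_self X
  set U : Matrix (Fin T) (Fin T) ℝ := (hB.eigenvectorUnitary : Matrix (Fin T) (Fin T) ℝ)
  have hstar : star U = Uᵀ := by
    rw [star_eq_conjTranspose, conjTranspose_eq_transpose_of_trivial]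
  have hU : Uᵀ * U = 1 := by
    rw [← hstar]
    exact Unitary.coe_star_mul_self hB.eigenvectorUnitary
  have hdiag : (X * U)ᵀ * (X * U) = diagonal hB.eigenvalues := by
    have := hB.conjStarAlgAut_star_eigenvectorUnitary
    rw [Unitary.conjStarAlgAut_apply, Unitary.coe_star, star_star, hstar] at this
    simpa [Matrix.mul_assoc] using this
  have hcol : ∀ k, ∑ i, (X * U) i k ^ 2 = hB.eigenvalues k := by
    intro k
    have h := congrFun (congrFun hdiag k) k
    rw [mul_apply, diagonal_apply_eq] at h
    simpa only [transpose_apply, sq] using h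
  calc diagAbsSum X = diagAbsSum ((X * U) * Uᵀ) := by
        rw [Matrix.mul_assoc, mul_eq_one_comm.mp hU, Matrix.mul_one]
    _ ≤ ∑ k, √(∑ i, (X * U) i k ^ 2) := diagAbsSum_mul_transpose_le _ hU
    _ = nuclearNorm X := by simp only [hcol]; rfl

def rectDiag (N T : ℕ) (d : ℕ → ℝ) : Matrix (Fin N) (Fin T) ℝ :=
  of fun i t => if (i : ℕ) = (t : ℕ) then d i else 0

theorem transpose_rectDiag_mul_rectDiag {N T : ℕ} (d : ℕ → ℝ) :
    (rectDiag N T d)ᵀ * rectDiag N T d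
      = diagonal fun t : Fin T => ∑ i : Fin N, if (i : ℕ) = t then d i ^ 2 else 0 := by
  ext t t'
  simp only [rectDiag, mul_apply, transpose_apply, of_apply, ite_zero_mul_ite_zero, diagonal_apply]
  split_ifs with htt'
  · simp [htt', sq]
  · refine Finset.sum_eq_zero fun i _ => if_neg ?_
    rintro ⟨hit, hit'⟩
    exact htt' (Fin.ext (hit.symm.trans hit'))

theorem nuclearNorm_rectDiag {N T : ℕ} (d : ℕ → ℝ) :
    nuclearNorm (rectDiag N T d) = diagAbsSum (rectDiag N T d) := by
  have hsqrt : ∀ t : Fin T, √(∑ i : Fin N, if (i : ℕ) = t then d i ^ 2 else 0)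
      = ∑ i : Fin N, if (i : ℕ) = t then |d i| else 0 := by
    intro t
    simp only [Fin.sum_ite_val_eq]
    split_ifs <;> simp [Real.sqrt_sq_eq_abs]
  calc nuclearNorm (rectDiag N T d)
      = ∑ t : Fin T, ∑ i : Fin N, if (i : ℕ) = t then |d i| else 0 := by
        simp only [nuclearNorm, singVals, ← hsqrt]
        exact (isHermitian_conjTranspose_mul_self _).sum_comp_eigenvalues_of_eq_diagonal
          (transpose_rectDiag_mul_rectDiag d) Real.sqrt
    _ = diagAbsSum (rectDiag N T d) := by
        rw [Finset.sum_comm]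
        unfold diagAbsSum rectDiag
        refine Finset.sum_congr rfl fun i _ => Finset.sum_congr rfl fun t _ => ?_
        split_ifs <;> simp_all

theorem soft_threshold_quadratic_growth {s lam : ℝ} (hs : 0 ≤ s) (hlam : 0 ≤ lam) (x : ℝ) :
    1 / 2 * (s - max (s - lam) 0) ^ 2 + lam * |max (s - lam) 0| + 1 / 2 * (x - max (s - lam) 0) ^ 2
      ≤ 1 / 2 * (s - x) ^ 2 + lam * |x| := by
  -- the slack is `lam * (|x| - x)` when `lam ≤ s`, and `lam * |x| - s * x` otherwise
  rcases le_total lam s with h | h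
  · rw [max_eq_left (by linarith), abs_of_nonneg (by linarith)]
    nlinarith [le_abs_self x]
  · rw [max_eq_right (by linarith), abs_zero]
    nlinarith [le_abs_self x, abs_nonneg x]

theorem rectDiag_soft_threshold_quadratic_growth {N T : ℕ} {σ : ℕ → ℝ} (hσ : ∀ i, 0 ≤ σ i)
    {lam : ℝ} (hlam : 0 ≤ lam) (X : Matrix (Fin N) (Fin T) ℝ) :
    1 / 2 * frobNorm (rectDiag N T σ - rectDiag N T fun k => max (σ k - lam) 0) ^ 2
        + lam * diagAbsSum (rectDiag N T fun k => max (σ k - lam) 0)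
        + 1 / 2 * frobNorm (X - rectDiag N T fun k => max (σ k - lam) 0) ^ 2
      ≤ 1 / 2 * frobNorm (rectDiag N T σ - X) ^ 2 + lam * diagAbsSum X := by
  simp only [frobNorm_sq, diagAbsSum, Finset.mul_sum, ← Finset.sum_add_distrib]
  refine Finset.sum_le_sum fun i _ => Finset.sum_le_sum fun t _ => ?_
  by_cases hit : (i : ℕ) = t
  · simpa [rectDiag, hit] using soft_threshold_quadratic_growth (hσ t) hlam (X i t)
  · simp [rectDiag, hit]

theorem rectDiag_soft_threshold_lt {N T : ℕ} {σ : ℕ → ℝ} (hσ : ∀ i, 0 ≤ σ i) {lam : ℝ}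
    (hlam : 0 ≤ lam) {X : Matrix (Fin N) (Fin T) ℝ}
    (hX : X ≠ rectDiag N T fun k => max (σ k - lam) 0) :
    1 / 2 * frobNorm (rectDiag N T σ - rectDiag N T fun k => max (σ k - lam) 0) ^ 2
        + lam * nuclearNorm (rectDiag N T fun k => max (σ k - lam) 0)
      < 1 / 2 * frobNorm (rectDiag N T σ - X) ^ 2 + lam * nuclearNorm X := by
  have hgap := pow_pos (frobNorm_pos (sub_ne_zero.mpr hX)) 2
  have hgrowth := rectDiag_soft_threshold_quadratic_growth hσ hlam X
  have hnuc := mul_le_mul_of_nonneg_left (diagAbsSum_le_nuclearNorm X) hlam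
  rw [nuclearNorm_rectDiag]
  linarith

theorem shrink_is_unique_minimizer {N T : ℕ}
    (A : Matrix (Fin N) (Fin T) ℝ) (lam : ℝ) (hlam : 0 ≤ lam)
    (S : Matrix (Fin N) (Fin N) ℝ) (R : Matrix (Fin T) (Fin T) ℝ)
    (hS : Sᵀ * S = 1) (hR : Rᵀ * R = 1)
    (σ : ℕ → ℝ) (hσ : ∀ i, 0 ≤ σ i)
    (hA : A = S * (Matrix.of fun (i : Fin N) (t : Fin T) => if (i : ℕ) = (t : ℕ) then σ i else 0) * Rᵀ) :
    ∀ L : Matrix (Fin N) (Fin T) ℝ,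
      L ≠ S * (Matrix.of fun (i : Fin N) (t : Fin T) => if (i : ℕ) = (t : ℕ) then max (σ i - lam) 0 else 0) * Rᵀ →
      (1/2) * (frobNorm (A - S * (Matrix.of fun (i : Fin N) (t : Fin T) => if (i : ℕ) = (t : ℕ) then max (σ i - lam) 0 else 0) * Rᵀ))^2
        + lam * nuclearNorm (S * (Matrix.of fun (i : Fin N) (t : Fin T) => if (i : ℕ) = (t : ℕ) then max (σ i - lam) 0 else 0) * Rᵀ)
      < (1/2) * (frobNorm (A - L))^2 + lam * nuclearNorm L := by
  intro L hL
  obtain ⟨X, rfl⟩ : ∃ X, L = S * X * Rᵀ := ⟨Sᵀ * L * R, by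
    simp only [← Matrix.mul_assoc, mul_eq_one_comm.mp hS, Matrix.one_mul]
    rw [Matrix.mul_assoc, mul_eq_one_comm.mp hR, Matrix.mul_one]⟩
  have hX : X ≠ rectDiag N T fun k => max (σ k - lam) 0 := fun h => hL (by rw [h]; rfl)
  subst hA
  rw [← Matrix.sub_mul, ← Matrix.mul_sub, ← Matrix.sub_mul, ← Matrix.mul_sub]
  simp only [frobNorm_mul_mul_transpose hS hR, nuclearNorm_mul_mul_transpose hS hR]
  exact rectDiag_soft_threshold_lt hσ hlam hX
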